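/- Let f = h + conj(g) be a harmonic mapping on the unit disk 𝔻 and suppose that |f(z)| ≤ k for all z ∈ 𝔻 for some constant k > 0. Then f is normal and ‖f‖_n ≤ 4k/π. -/

import Mathlib

/-!
For a unimodular `e` the function `G = e h + ē g` is analytic with `Re G = Re (e f)`, so
`|Re G| ≤ k`; choosing `e` to rotate `h'(z)` and `g'(z)` into a common direction makes
`|G'(z)| = |h'(z)| + |g'(z)|`. Since `tan (π G / 4k)` maps `𝔻` into `𝔻`, the Schwarz–Pick lemma
bounds `(1 - |z|²) |G'(z)|` by `4k/π`, and the denominator `1 + |f|²` is at least `1`.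
-/

open Complex Metric Set ENNReal Filter

noncomputable section

/-- The open unit disk in the complex plane. -/
def unitDisk : Set ℂ := Metric.ball (0 : ℂ) 1

notation "𝔻" => unitDisk

/-- The chordal distance on ℂ. -/
def chordal (z w : ℂ) : ℝ :=
  ‖z - w‖ /
    (Real.sqrt (1 + ‖z‖ ^ 2) * Real.sqrt (1 + ‖w‖ ^ 2))

/-- The hyperbolic distance on the unit disk. -/
def hypDist (z w : ℂ) : ℝ :=
  (1 / 2) * Real.log
    ((1 + ‖(z - w) / (1 - (starRingEnd ℂ) z * w)‖) /
     (1 - ‖(z - w) / (1 - (starRingEnd ℂ) z * w)‖))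

/-- The harmonic mapping `f = h + conj g`. -/
def harmMap (h g : ℂ → ℂ) : ℂ → ℂ := fun z => h z + (starRingEnd ℂ) (g z)

/-- The quantity `(1 - |z|²) (|h'(z)| + |g'(z)|) / (1 + |f(z)|²)` for `f = h + conj g`. -/
def nQuot (h g : ℂ → ℂ) (z : ℂ) : ℝ :=
  (1 - ‖z‖ ^ 2) * (‖deriv h z‖ + ‖deriv g z‖) /
    (1 + ‖harmMap h g z‖ ^ 2)

/-- `‖f‖ₙ`, the normality norm of the harmonic mapping `f = h + conj g`,
as an element of `[0, ∞]`. -/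
def harmNorm (h g : ℂ → ℂ) : ℝ≥0∞ :=
  ⨆ z ∈ 𝔻, ENNReal.ofReal (nQuot h g z)

/-- `φ` is a conformal automorphism of the unit disk. -/
def IsDiskAut (φ : ℂ → ℂ) : Prop :=
  DifferentiableOn ℂ φ 𝔻 ∧ Set.MapsTo φ 𝔻 𝔻 ∧
    ∃ ψ : ℂ → ℂ, DifferentiableOn ℂ ψ 𝔻 ∧ Set.MapsTo ψ 𝔻 𝔻 ∧
      (∀ z ∈ 𝔻, ψ (φ z) = z) ∧ (∀ z ∈ 𝔻, φ (ψ z) = z)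

open ComplexConjugate

lemma mem_unitDisk {z : ℂ} : z ∈ 𝔻 ↔ ‖z‖ < 1 := mem_ball_zero_iff

lemma one_sub_norm_sq_pos {z : ℂ} (hz : z ∈ 𝔻) : 0 < 1 - ‖z‖ ^ 2 :=
  sub_pos.2 (pow_lt_one₀ (norm_nonneg _) (mem_unitDisk.1 hz) two_ne_zero)

lemma isOpen_unitDisk : IsOpen 𝔻 := isOpen_ball

lemma zero_mem_unitDisk : (0 : ℂ) ∈ 𝔻 := mem_ball_self one_pos

def diskMoebius (a w : ℂ) : ℂ := (w - a) / (1 - conj a * w)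

section diskMoebius

variable {a : ℂ}

lemma one_sub_conj_mul_ne_zero (ha : ‖a‖ < 1) {w : ℂ} (hw : ‖w‖ < 1) : 1 - conj a * w ≠ 0 := by
  have : ‖conj a * w‖ < 1 := by
    rw [norm_mul, Complex.norm_conj]
    exact mul_lt_one_of_nonneg_of_lt_one_left (norm_nonneg a) ha hw.le
  rw [sub_ne_zero]
  rintro h
  rw [← h, norm_one] at this
  exact this.false

lemma hasDerivAt_diskMoebius (ha : ‖a‖ < 1) {w : ℂ} (hw : ‖w‖ < 1) :
    HasDerivAt (diskMoebius a) (((1 - ‖a‖ ^ 2 : ℝ) : ℂ) / (1 - conj a * w) ^ 2) w := by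
  have hnum : HasDerivAt (fun w : ℂ => w - a) 1 w := (hasDerivAt_id w).sub_const a
  have hden : HasDerivAt (fun w : ℂ => 1 - conj a * w) (-conj a) w := by
    simpa using ((hasDerivAt_id w).const_mul (conj a)).const_sub 1
  refine (hnum.div hden (one_sub_conj_mul_ne_zero ha hw)).congr_deriv ?_
  push_cast
  rw [← conj_mul']
  ring

lemma differentiableOn_diskMoebius (ha : ‖a‖ < 1) : DifferentiableOn ℂ (diskMoebius a) 𝔻 :=
  fun _ hw =>
    (hasDerivAt_diskMoebius ha (mem_unitDisk.1 hw)).differentiableAt.differentiableWithinAt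

@[simp] lemma diskMoebius_self : diskMoebius a a = 0 := by simp [diskMoebius]

@[simp] lemma diskMoebius_neg_zero : diskMoebius (-a) 0 = a := by simp [diskMoebius]

lemma hasDerivAt_diskMoebius_self (ha : ‖a‖ < 1) :
    HasDerivAt (diskMoebius a) (((1 - ‖a‖ ^ 2)⁻¹ : ℝ) : ℂ) a := by
  have hpos : (1 - ‖a‖ ^ 2 : ℂ) ≠ 0 := by
    exact_mod_cast (one_sub_norm_sq_pos (mem_unitDisk.2 ha)).ne'
  convert hasDerivAt_diskMoebius ha ha using 1
  rw [conj_mul']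
  push_cast
  field_simp

lemma hasDerivAt_diskMoebius_neg_zero (ha : ‖a‖ < 1) :
    HasDerivAt (diskMoebius (-a)) ((1 - ‖a‖ ^ 2 : ℝ) : ℂ) 0 := by
  simpa using hasDerivAt_diskMoebius (a := -a) (by simpa using ha) (w := 0) (by simp)

lemma mapsTo_diskMoebius (ha : ‖a‖ < 1) : MapsTo (diskMoebius a) 𝔻 𝔻 := by
  intro w hw
  rw [mem_unitDisk] at hw ⊢
  have hne := one_sub_conj_mul_ne_zero ha hw
  rw [diskMoebius, norm_div, div_lt_one (norm_pos_iff.2 hne),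
    ← sq_lt_sq₀ (norm_nonneg _) (norm_nonneg _), Complex.sq_norm, Complex.sq_norm]
  have key : normSq (1 - conj a * w) - normSq (w - a) = (1 - normSq a) * (1 - normSq w) := by
    simp only [normSq_apply, sub_re, sub_im, mul_re, mul_im, one_re, one_im, conj_re, conj_im]
    ring
  have := mul_pos (one_sub_norm_sq_pos (mem_unitDisk.2 ha))
    (one_sub_norm_sq_pos (mem_unitDisk.2 hw))
  rw [Complex.sq_norm, Complex.sq_norm] at this
  linarith

end diskMoebius

/-- Schwarz–Pick, obtained from the Schwarz lemma for `diskMoebius (F z) ∘ F ∘ diskMoebius (-z)`. -/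
theorem one_sub_sq_mul_norm_deriv_le {F : ℂ → ℂ} (hF : DifferentiableOn ℂ F 𝔻)
    (hmaps : MapsTo F 𝔻 𝔻) {z : ℂ} (hz : z ∈ 𝔻) :
    (1 - ‖z‖ ^ 2) * ‖deriv F z‖ ≤ 1 - ‖F z‖ ^ 2 := by
  have hz' := mem_unitDisk.1 hz
  have ha := mem_unitDisk.1 (hmaps hz)
  have hnegz : ‖-z‖ < 1 := by rwa [norm_neg]
  set Φ := diskMoebius (F z) ∘ F ∘ diskMoebius (-z)
  have hΦmaps : MapsTo Φ 𝔻 𝔻 :=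
    (mapsTo_diskMoebius ha).comp (hmaps.comp (mapsTo_diskMoebius hnegz))
  have hΦ : DifferentiableOn ℂ Φ 𝔻 :=
    (differentiableOn_diskMoebius ha).comp
      (hF.comp (differentiableOn_diskMoebius hnegz) (mapsTo_diskMoebius hnegz))
      (hmaps.comp (mapsTo_diskMoebius hnegz))
  have hschwarz : ‖deriv Φ 0‖ ≤ 1 := by
    refine Complex.norm_deriv_le_one_of_mapsTo_ball hΦ ?_ one_pos
    rw [show Φ 0 = 0 by simp [Φ]]
    exact hΦmaps.mono_right ball_subset_closedBall
  have hFz : HasDerivAt F (deriv F z) (diskMoebius (-z) 0) := by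
    rw [diskMoebius_neg_zero]
    exact (hF.differentiableAt (isOpen_unitDisk.mem_nhds hz)).hasDerivAt
  have hchain : deriv Φ 0 = ((1 - ‖F z‖ ^ 2)⁻¹ : ℝ) * (deriv F z * (1 - ‖z‖ ^ 2 : ℝ)) :=
    ((hasDerivAt_diskMoebius_self ha).comp_of_eq 0
      (hFz.comp 0 (hasDerivAt_diskMoebius_neg_zero hz')) (by simp)).deriv
  have hpos := one_sub_norm_sq_pos (hmaps hz)
  rw [hchain, norm_mul, norm_mul, Complex.norm_real, Complex.norm_real,
    Real.norm_of_nonneg (one_sub_norm_sq_pos hz).le,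
    Real.norm_of_nonneg (inv_pos.2 hpos).le, inv_mul_le_iff₀ hpos, mul_one] at hschwarz
  linarith

lemma normSq_cos_sub_normSq_sin (u : ℂ) :
    normSq (cos u) - normSq (sin u) = Real.cos (2 * u.re) := by
  have hcos :
      cos u = ↑(Real.cos u.re * Real.cosh u.im) + ↑(-(Real.sin u.re * Real.sinh u.im)) * I := by
    rw [cos_eq]; push_cast; ring
  have hsin :
      sin u = ↑(Real.sin u.re * Real.cosh u.im) + ↑(Real.cos u.re * Real.sinh u.im) * I := by
    rw [sin_eq]; push_cast; ring
  rw [hcos, hsin, normSq_add_mul_I, normSq_add_mul_I, Real.cos_two_mul]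
  linear_combination (Real.cos u.re ^ 2 - Real.sin u.re ^ 2) * Real.cosh_sq u.im
    - Real.sin_sq_add_cos_sq u.re

lemma normSq_sin_lt_normSq_cos {u : ℂ} (hu : |u.re| < Real.pi / 4) :
    normSq (sin u) < normSq (cos u) := by
  have := Real.pi_pos
  rw [← sub_pos, normSq_cos_sub_normSq_sin]
  apply Real.cos_pos_of_mem_Ioo
  constructor <;> linarith [abs_lt.1 hu]

lemma cos_ne_zero_of_abs_re_lt {u : ℂ} (hu : |u.re| < Real.pi / 4) : cos u ≠ 0 := by
  intro h
  have := normSq_sin_lt_normSq_cos hu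
  rw [h, map_zero] at this
  exact (normSq_nonneg _).not_gt this

lemma norm_tan_lt_one {u : ℂ} (hu : |u.re| < Real.pi / 4) : ‖tan u‖ < 1 := by
  rw [tan_eq_sin_div_cos, norm_div, div_lt_one (norm_pos_iff.2 (cos_ne_zero_of_abs_re_lt hu)),
    ← sq_lt_sq₀ (norm_nonneg _) (norm_nonneg _), Complex.sq_norm, Complex.sq_norm]
  exact normSq_sin_lt_normSq_cos hu

lemma one_sub_norm_sq_le_norm_one_add_sq (t : ℂ) : 1 - ‖t‖ ^ 2 ≤ ‖1 + t ^ 2‖ := by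
  have := norm_sub_norm_le (1 : ℂ) (-t ^ 2)
  rwa [sub_neg_eq_add, norm_one, norm_neg, norm_pow] at this

/-- Schwarz–Pick for `F = tan (π G / 4k)`, where `|F'| = |1 + F²| (π / 4k) |G'|` and
`|1 + F²| ≥ 1 - |F|²` cancels the right-hand side. -/
theorem one_sub_sq_mul_norm_deriv_le_of_abs_re_lt {G : ℂ → ℂ} (hG : DifferentiableOn ℂ G 𝔻)
    {k : ℝ} (hre : ∀ w ∈ 𝔻, |(G w).re| < k) {z : ℂ} (hz : z ∈ 𝔻) :
    (1 - ‖z‖ ^ 2) * ‖deriv G z‖ ≤ 4 * k / Real.pi := by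
  have hk : 0 < k := (abs_nonneg _).trans_lt (hre 0 zero_mem_unitDisk)
  set c : ℝ := Real.pi / (4 * k)
  have hc : 0 < c := by positivity
  have hstrip : ∀ w ∈ 𝔻, |((c : ℂ) * G w).re| < Real.pi / 4 := by
    intro w hw
    rw [re_ofReal_mul, abs_mul, abs_of_pos hc]
    calc c * |(G w).re| < c * k := mul_lt_mul_of_pos_left (hre w hw) hc
      _ = Real.pi / 4 := by simp only [c]; field_simp
  set F : ℂ → ℂ := fun w => tan ((c : ℂ) * G w)
  have hF : DifferentiableOn ℂ F 𝔻 := fun w hw =>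
    (differentiableAt_tan.2 (cos_ne_zero_of_abs_re_lt (hstrip w hw))).comp_differentiableWithinAt
      (g := tan) w ((hG w hw).const_mul _)
  have hFmaps : MapsTo F 𝔻 𝔻 := fun w hw => mem_unitDisk.2 (norm_tan_lt_one (hstrip w hw))
  set t := F z
  have hcos := cos_ne_zero_of_abs_re_lt (hstrip z hz)
  have hderiv : deriv F z = (1 + t ^ 2) * ((c : ℂ) * deriv G z) := by
    rw [← inv_inv (1 + t ^ 2), inv_one_add_tan_sq hcos, ← one_div]
    exact ((hasDerivAt_tan hcos).comp z
      ((hG.differentiableAt (isOpen_unitDisk.mem_nhds hz)).hasDerivAt.const_mul _)).deriv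
  have ht := one_sub_norm_sq_pos (hFmaps hz)
  have hpick := one_sub_sq_mul_norm_deriv_le hF hFmaps hz
  rw [hderiv, norm_mul, norm_mul, norm_real, Real.norm_of_nonneg hc.le] at hpick
  have : (1 - ‖z‖ ^ 2) * ‖deriv G z‖ * c ≤ 1 := by
    refine le_of_mul_le_mul_left ?_ ht
    calc (1 - ‖t‖ ^ 2) * ((1 - ‖z‖ ^ 2) * ‖deriv G z‖ * c)
        ≤ ‖1 + t ^ 2‖ * ((1 - ‖z‖ ^ 2) * ‖deriv G z‖ * c) := by
          have := (one_sub_norm_sq_pos hz).le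
          gcongr
          exact one_sub_norm_sq_le_norm_one_add_sq t
      _ ≤ (1 - ‖t‖ ^ 2) * 1 := by linarith
  rwa [← le_div_iff₀ hc, one_div_div] at this

theorem one_sub_sq_mul_norm_deriv_le_of_abs_re_le {G : ℂ → ℂ} (hG : DifferentiableOn ℂ G 𝔻)
    {k : ℝ} (hre : ∀ w ∈ 𝔻, |(G w).re| ≤ k) {z : ℂ} (hz : z ∈ 𝔻) :
    (1 - ‖z‖ ^ 2) * ‖deriv G z‖ ≤ 4 * k / Real.pi := by
  refine le_of_forall_gt_imp_ge_of_dense fun K hK => ?_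
  have hk : k < Real.pi * K / 4 := by
    rw [div_lt_iff₀ Real.pi_pos] at hK
    linarith
  calc (1 - ‖z‖ ^ 2) * ‖deriv G z‖
      ≤ 4 * (Real.pi * K / 4) / Real.pi :=
        one_sub_sq_mul_norm_deriv_le_of_abs_re_lt hG (fun w hw => (hre w hw).trans_lt hk) hz
    _ = K := by field_simp

/-- `e = exp (i (arg b - arg a) / 2)` gives `e a` and `ē b` the common argument
`(arg a + arg b) / 2`. -/
lemma exists_norm_eq_one_norm_mul_add_conj_mul (a b : ℂ) :
    ∃ e : ℂ, ‖e‖ = 1 ∧ ‖e * a + conj e * b‖ = ‖a‖ + ‖b‖ := by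
  set θ : ℝ := (arg b - arg a) / 2
  set ω : ℂ := exp (((arg a + arg b) / 2 : ℝ) * I)
  have ha : exp (θ * I) * exp (arg a * I) = ω := by
    rw [← exp_add]; congr 1; push_cast [θ]; ring
  have hb : conj (exp (θ * I)) * exp (arg b * I) = ω := by
    rw [← exp_conj, ← exp_add, map_mul, conj_ofReal, conj_I]; congr 1; push_cast [θ]; ring
  refine ⟨exp (θ * I), norm_exp_ofReal_mul_I θ, ?_⟩
  calc ‖exp (θ * I) * a + conj (exp (θ * I)) * b‖
      = ‖((‖a‖ + ‖b‖ : ℝ) : ℂ) * ω‖ := by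
        conv_lhs => rw [← norm_mul_exp_arg_mul_I a, ← norm_mul_exp_arg_mul_I b]
        rw [mul_left_comm, ha, mul_left_comm, hb, Complex.ofReal_add, add_mul]
    _ = ‖a‖ + ‖b‖ := by
        rw [norm_mul, norm_exp_ofReal_mul_I, norm_real, Real.norm_of_nonneg (by positivity),
          mul_one]

lemma re_mul_add_conj_mul (e a b : ℂ) : (e * a + conj e * b).re = (e * (a + conj b)).re := by
  simp only [add_re, mul_re, conj_re, conj_im, mul_add]
  ring

theorem one_sub_sq_mul_norm_deriv_add_le {h g : ℂ → ℂ} (hh : DifferentiableOn ℂ h 𝔻)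
    (hg : DifferentiableOn ℂ g 𝔻) {k : ℝ} (hbound : ∀ z ∈ 𝔻, ‖harmMap h g z‖ ≤ k)
    {z : ℂ} (hz : z ∈ 𝔻) :
    (1 - ‖z‖ ^ 2) * (‖deriv h z‖ + ‖deriv g z‖) ≤ 4 * k / Real.pi := by
  obtain ⟨e, he, hnorm⟩ := exists_norm_eq_one_norm_mul_add_conj_mul (deriv h z) (deriv g z)
  set G : ℂ → ℂ := fun w => e * h w + conj e * g w
  have hG : DifferentiableOn ℂ G 𝔻 := (hh.const_mul e).add (hg.const_mul (conj e))
  have hderiv : deriv G z = e * deriv h z + conj e * deriv g z :=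
    (((hh.differentiableAt (isOpen_unitDisk.mem_nhds hz)).hasDerivAt.const_mul e).add
      ((hg.differentiableAt (isOpen_unitDisk.mem_nhds hz)).hasDerivAt.const_mul (conj e))).deriv
  have hre : ∀ w ∈ 𝔻, |(G w).re| ≤ k := fun w hw =>
    calc |(G w).re| = |(e * harmMap h g w).re| := by rw [re_mul_add_conj_mul]; rfl
      _ ≤ ‖e * harmMap h g w‖ := abs_re_le_norm _
      _ ≤ k := by rw [norm_mul, he, one_mul]; exact hbound w hw
  rw [← hnorm, ← hderiv]
  exact one_sub_sq_mul_norm_deriv_le_of_abs_re_le hG hre hz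

lemma nQuot_le {h g : ℂ → ℂ} {z : ℂ} (hz : z ∈ 𝔻) :
    nQuot h g z ≤ (1 - ‖z‖ ^ 2) * (‖deriv h z‖ + ‖deriv g z‖) := by
  have := (one_sub_norm_sq_pos hz).le
  exact div_le_self (by positivity) (le_add_of_nonneg_right (sq_nonneg _))

theorem harmNorm_le_of_bounded_general (h g : ℂ → ℂ)
    (hh : DifferentiableOn ℂ h 𝔻) (hg : DifferentiableOn ℂ g 𝔻)
    (k : ℝ) (hbound : ∀ z ∈ 𝔻, ‖harmMap h g z‖ ≤ k) :
    harmNorm h g ≤ ENNReal.ofReal (4 * k / Real.pi) :=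
  iSup₂_le fun _ hz => ENNReal.ofReal_le_ofReal <|
    (nQuot_le hz).trans (one_sub_sq_mul_norm_deriv_add_le hh hg hbound hz)

theorem harmNorm_le_of_bounded (h g : ℂ → ℂ)
    (hh : DifferentiableOn ℂ h 𝔻) (hg : DifferentiableOn ℂ g 𝔻)
    (k : ℝ) (hk : 0 < k) (hbound : ∀ z ∈ 𝔻, ‖harmMap h g z‖ ≤ k) :
    harmNorm h g ≤ ENNReal.ofReal (4 * k / Real.pi) :=
  harmNorm_le_of_bounded_general h g hh hg k hbound
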